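/- Let β, κ > 0 and α ∈ ℝ. Then there exists m = (m₁, m₂) ∈ [−1,1]² solving the self-consistency equation m = R(m) for the HKB model. Consequently, the HKB McKean–Vlasov equation admits at least one stationary state of the form ρ_∞(·, m) for every choice of the parameters β, κ, α. -/
import Mathlib


open Real MeasureTheory

/-- The HKB normalization constant `Z(m)`. -/
noncomputable def Zhkb (β κ α : ℝ) (m : ℝ × ℝ) : ℝ :=
  ∫ y in (0:ℝ)..(2 * π),
    Real.exp (-β * (α * Real.cos (2 * y) - κ * (m.1 * Real.cos y + m.2 * Real.sin y)))

/-- The HKB candidate stationary density `ρ_∞(x, m)`. -/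
noncomputable def rhoInf (β κ α : ℝ) (m : ℝ × ℝ) (x : ℝ) : ℝ :=
  (Zhkb β κ α m)⁻¹ *
    Real.exp (-β * (α * Real.cos (2 * x) - κ * (m.1 * Real.cos x + m.2 * Real.sin x)))

/-- The HKB self-consistency map `R(m) = (∫ cos·ρ_∞(·,m), ∫ sin·ρ_∞(·,m))`. -/
noncomputable def Rhkb (β κ α : ℝ) (m : ℝ × ℝ) : ℝ × ℝ :=
  (∫ x in (0:ℝ)..(2 * π), Real.cos x * rhoInf β κ α m x,
   ∫ x in (0:ℝ)..(2 * π), Real.sin x * rhoInf β κ α m x)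

/-- `ρ` is a Kirkwood–Monroe fixed point for the HKB model with confining potential
`V(x) = α cos(2x)` and interaction kernel `w(x) = −κ cos(x)`. -/
def IsKMhkb (β κ α : ℝ) (ρ : ℝ → ℝ) : Prop :=
  ∀ x : ℝ, ρ x =
    (∫ y in (0:ℝ)..(2 * π), Real.exp (-β * (α * Real.cos (2 * y)
        + ∫ z in (0:ℝ)..(2 * π), (-κ * Real.cos (y - z)) * ρ z)))⁻¹ *
      Real.exp (-β * (α * Real.cos (2 * x)
        + ∫ y in (0:ℝ)..(2 * π), (-κ * Real.cos (x - y)) * ρ y))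

lemma antiperiodic_int_zero (g : ℝ → ℝ) (hg : Continuous g)
    (h : ∀ x, g (x + π) = -g x) : ∫ x in (0:ℝ)..(2*π), g x = 0 := by
  have h1 : (∫ x in (0:ℝ)..π, g x) + (∫ x in π..(2*π), g x)
      = ∫ x in (0:ℝ)..(2*π), g x :=
    intervalIntegral.integral_add_adjacent_intervals
      (hg.intervalIntegrable _ _) (hg.intervalIntegrable _ _)
  have h2 : (∫ x in π..(2*π), g x) = ∫ x in (0:ℝ)..π, g (x + π) := by
    rw [intervalIntegral.integral_comp_add_right]; norm_num; ring_nf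
  have h3 : (∫ x in (0:ℝ)..π, g (x + π)) = -∫ x in (0:ℝ)..π, g x := by
    simp_rw [h]; exact intervalIntegral.integral_neg
  rw [← h1, h2, h3]; ring

/-- For every choice of the parameters `β, κ > 0`, `α ∈ ℝ`, the HKB
self-consistency equation `m = R(m)` has a solution `m ∈ [−1,1]²`; consequently the HKB
McKean–Vlasov equation admits at least one stationary state `ρ_∞(·,m)` (a Kirkwood–Monroe
fixed point). -/
theorem stmt10 (β κ α : ℝ) (hβ : 0 < β) (hκ : 0 < κ) :
    ∃ m ∈ Set.Icc ((-1 : ℝ), (-1 : ℝ)) ((1 : ℝ), (1 : ℝ)),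
      Rhkb β κ α m = m ∧ IsKMhkb β κ α (rhoInf β κ α m) := by
  set E : ℝ → ℝ := fun x => Real.exp (-β * (α * Real.cos (2 * x))) with hE
  have hEcont : Continuous E := by fun_prop
  have hEper : ∀ x, E (x + π) = E x := by
    intro x
    have : Real.cos (2 * (x + π)) = Real.cos (2 * x) := by
      rw [show 2 * (x + π) = 2 * x + 2 * π by ring, Real.cos_add_two_pi]
    simp [hE, this]
  -- cos moment is zero
  have hcos : (∫ x in (0:ℝ)..(2*π), Real.cos x * E x) = 0 := by
    apply antiperiodic_int_zero _ (by fun_prop)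
    intro x
    rw [Real.cos_add_pi, hEper]; ring
  have hsin : (∫ x in (0:ℝ)..(2*π), Real.sin x * E x) = 0 := by
    apply antiperiodic_int_zero _ (by fun_prop)
    intro x
    rw [Real.sin_add_pi, hEper]; ring
  have hrho : rhoInf β κ α (0,0) = fun x => (Zhkb β κ α (0,0))⁻¹ * E x := by
    funext x; simp [rhoInf, hE]
  have hRcos : (∫ x in (0:ℝ)..(2*π), Real.cos x * rhoInf β κ α (0,0) x) = 0 := by
    rw [hrho]
    have : ∀ x, Real.cos x * ((Zhkb β κ α (0,0))⁻¹ * E x)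
        = (Zhkb β κ α (0,0))⁻¹ * (Real.cos x * E x) := fun x => by ring
    simp_rw [this, intervalIntegral.integral_const_mul, hcos, mul_zero]
  have hRsin : (∫ x in (0:ℝ)..(2*π), Real.sin x * rhoInf β κ α (0,0) x) = 0 := by
    rw [hrho]
    have : ∀ x, Real.sin x * ((Zhkb β κ α (0,0))⁻¹ * E x)
        = (Zhkb β κ α (0,0))⁻¹ * (Real.sin x * E x) := fun x => by ring
    simp_rw [this, intervalIntegral.integral_const_mul, hsin, mul_zero]
  have hRfix : Rhkb β κ α (0,0) = (0,0) := by
    have : Rhkb β κ α (0,0) = (∫ x in (0:ℝ)..(2*π), Real.cos x * rhoInf β κ α (0,0) x,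
        ∫ x in (0:ℝ)..(2*π), Real.sin x * rhoInf β κ α (0,0) x) := rfl
    rw [this, hRcos, hRsin]
  refine ⟨(0,0), by constructor <;> constructor <;> norm_num, hRfix, ?_⟩
  -- IsKMhkb
  have hrhocont : Continuous (rhoInf β κ α (0,0)) := by
    rw [hrho]; fun_prop
  have hJ : ∀ x, (∫ y in (0:ℝ)..(2*π), (-κ * Real.cos (x - y)) * rhoInf β κ α (0,0) y) = 0 := by
    intro x
    have hsplit : ∀ y, (-κ * Real.cos (x - y)) * rhoInf β κ α (0,0) y
        = (-κ * Real.cos x) * (Real.cos y * rhoInf β κ α (0,0) y)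
          + (-κ * Real.sin x) * (Real.sin y * rhoInf β κ α (0,0) y) := by
      intro y; rw [Real.cos_sub]; ring
    simp_rw [hsplit]
    rw [intervalIntegral.integral_add
        (by exact (by fun_prop : Continuous fun y => (-κ * Real.cos x) * (Real.cos y * rhoInf β κ α (0,0) y)).intervalIntegrable _ _)
        (by exact (by fun_prop : Continuous fun y => (-κ * Real.sin x) * (Real.sin y * rhoInf β κ α (0,0) y)).intervalIntegrable _ _),
      intervalIntegral.integral_const_mul, intervalIntegral.integral_const_mul,
      hRcos, hRsin]
    ring
  intro x
  simp_rw [hJ, add_zero]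
  rw [hrho]
  simp [hE, Zhkb]
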